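/- arXiv:2411.14990 — 3 statements merged into one kernel-verified Lean document; each statement's English description precedes it below -/
import Mathlib

section
/- For κ ≥ 2, the binomial coefficient C(β+κ, 2κ−1)·2^(2κ−1) is divisible by 2^(γ+1), where γ = ord₂(2(β+1)) and β ≥ κ − 1. Equivalently: ord₂(C(β+κ, 2κ−1)) + 2κ − 1 ≥ ord₂(2(β+1)) + 1. -/
open Nat

/-!
Since `β + 1` is one of the `2κ - 1` factors of the descending factorial
`(β + κ)(β + κ - 1) ⋯ (β - κ + 2) = (2κ - 1)! · C(β + κ, 2κ - 1)`, the valuation `ord₂(β + 1)` is at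
most `ord₂((2κ - 1)!) + ord₂ C(β + κ, 2κ - 1)`; and
`ord₂((2κ - 1)!) = ord₂((κ - 1)!) + (κ - 1) < 2κ - 2` because `ord₂(m!) < m` for `m ≥ 1`.
-/

theorem Nat.sub_dvd_descFactorial (n : ℕ) {i k : ℕ} (hi : i < k) : n - i ∣ n.descFactorial k := by
  rw [descFactorial_eq_prod_range]
  exact Finset.dvd_prod_of_mem _ (Finset.mem_range.2 hi)

theorem padicValNat_sub_le_factorial_add_choose {p n i k : ℕ} [Fact p.Prime] (hi : i < k)
    (hk : k ≤ n) : padicValNat p (n - i) ≤ padicValNat p k ! + padicValNat p (n.choose k) := by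
  have hchoose : n.choose k ≠ 0 := (choose_pos hk).ne'
  rw [← padicValNat.mul (factorial_ne_zero k) hchoose,
    ← padicValNat_dvd_iff_le (mul_ne_zero (factorial_ne_zero k) hchoose),
    ← descFactorial_eq_factorial_mul_choose]
  exact pow_padicValNat_dvd.trans (n.sub_dvd_descFactorial hi)

theorem padicValNat_two_factorial_two_mul_add_one_lt {m : ℕ} (hm : m ≠ 0) :
    padicValNat 2 (2 * m + 1)! < 2 * m := by
  rw [padicValNat_factorial_mul_add m one_lt_two, padicValNat_factorial_mul]
  have := padicValNat_factorial_lt_of_ne_zero 2 hm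
  omega

theorem stmt_16 (β κ : ℕ) (hκ : 2 ≤ κ) (hβ : κ - 1 ≤ β) :
    2 ^ (padicValNat 2 (2 * (β + 1)) + 1) ∣
      Nat.choose (β + κ) (2 * κ - 1) * 2 ^ (2 * κ - 1) ∧
    padicValNat 2 (Nat.choose (β + κ) (2 * κ - 1)) + (2 * κ - 1) ≥
      padicValNat 2 (2 * (β + 1)) + 1 := by
  have hodd : 2 * κ - 1 = 2 * (κ - 1) + 1 := by omega
  have hchoose : (β + κ).choose (2 * κ - 1) ≠ 0 := (choose_pos (by omega)).ne'
  have hfactor : padicValNat 2 (β + 1) ≤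
      padicValNat 2 (2 * κ - 1)! + padicValNat 2 ((β + κ).choose (2 * κ - 1)) := by
    have := padicValNat_sub_le_factorial_add_choose (p := 2) (i := κ - 1)
      (k := 2 * κ - 1) (n := β + κ) (by omega) (by omega)
    rwa [show β + κ - (κ - 1) = β + 1 by omega] at this
  have hlegendre : padicValNat 2 (2 * κ - 1)! < 2 * (κ - 1) := by
    rw [hodd]
    exact padicValNat_two_factorial_two_mul_add_one_lt (by omega)
  have htwo : padicValNat 2 (2 * (β + 1)) = padicValNat 2 (β + 1) + 1 := by
    rw [padicValNat.mul two_ne_zero (succ_ne_zero β), padicValNat_self, add_comm]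
  have hineq : padicValNat 2 ((β + κ).choose (2 * κ - 1)) + (2 * κ - 1) ≥
      padicValNat 2 (2 * (β + 1)) + 1 := by
    omega
  refine ⟨?_, hineq⟩
  rw [padicValNat_dvd_iff_le (mul_ne_zero hchoose (by positivity)),
    padicValNat.mul hchoose (by positivity), padicValNat.prime_pow]
  exact hineq
end

section
/- For every prime p ≡ 1 (mod 12) with p = x² + y² (x odd) and p = z² + 3w² (z odd), the integer [2p⁶ − 144p⁵x² + 1680p⁴x⁴ − 7168p³x⁶ + 13824p²x⁸ − 12288px¹⁰ + 4096x¹²] − [2p⁶ − 144p⁵z² + 1680p⁴z⁴ − 7168p³z⁶ + 13824p²z⁸ − 12288pz¹⁰ + 4096z¹²] is nonzero. -/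
/-!
Both brackets are values of `twelfthPowerTrace p`, which is `(t + iy)¹² + (t - iy)¹²` rewritten
with `y² = p - t²`. Their difference is divisible by `x² - z²`, and the quotient is `≡ 16 mod 32`
as soon as `p` is odd and `x ≡ z mod 2`, so it is nonzero. Finally `x² = z²` would force
`y² = 3w²`, hence `y = w = 0` and `p = x²`, which is impossible for a prime.
-/

def twelfthPowerTrace (P t : ℤ) : ℤ :=
  2 * P ^ 6 - 144 * P ^ 5 * t ^ 2 + 1680 * P ^ 4 * t ^ 4 - 7168 * P ^ 3 * t ^ 6
    + 13824 * P ^ 2 * t ^ 8 - 12288 * P * t ^ 10 + 4096 * t ^ 12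

def twelfthPowerTraceDiffQuotient (P x z : ℤ) : ℤ :=
  -144 * P ^ 5 + 1680 * P ^ 4 * (x ^ 2 + z ^ 2)
    + 32 * (-224 * P ^ 3 * (x ^ 4 + x ^ 2 * z ^ 2 + z ^ 4)
      + 432 * P ^ 2 * (x ^ 6 + x ^ 4 * z ^ 2 + x ^ 2 * z ^ 4 + z ^ 6)
      - 384 * P * (x ^ 8 + x ^ 6 * z ^ 2 + x ^ 4 * z ^ 4 + x ^ 2 * z ^ 6 + z ^ 8)
      + 128 * (x ^ 10 + x ^ 8 * z ^ 2 + x ^ 6 * z ^ 4 + x ^ 4 * z ^ 6 + x ^ 2 * z ^ 8 + z ^ 10))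

theorem twelfthPowerTrace_sub (P x z : ℤ) :
    twelfthPowerTrace P x - twelfthPowerTrace P z
      = (x ^ 2 - z ^ 2) * twelfthPowerTraceDiffQuotient P x z := by
  unfold twelfthPowerTrace twelfthPowerTraceDiffQuotient
  ring

theorem twelfthPowerTraceDiffQuotient_modEq {P x z : ℤ} (hP : Odd P)
    (hxz : Even (x ^ 2 + z ^ 2)) : twelfthPowerTraceDiffQuotient P x z ≡ 16 [ZMOD 32] := by
  obtain ⟨a, ha⟩ := hP.pow (n := 5)
  obtain ⟨b, hb⟩ := hxz
  unfold twelfthPowerTraceDiffQuotient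
  rw [Int.ModEq, Int.add_mul_emod_self_left, ha, hb,
    show -144 * (2 * a + 1) + 1680 * P ^ 4 * (b + b)
      = 16 + 32 * (105 * P ^ 4 * b - 9 * a - 5) by ring,
    Int.add_mul_emod_self_left]

theorem twelfthPowerTraceDiffQuotient_ne_zero {P x z : ℤ} (hP : Odd P)
    (hxz : Even (x ^ 2 + z ^ 2)) : twelfthPowerTraceDiffQuotient P x z ≠ 0 := by
  intro h
  have := twelfthPowerTraceDiffQuotient_modEq hP hxz
  rw [h] at this
  exact absurd this (by decide)

instance : Zsqrtd.Nonsquare 3 := ⟨fun n h => Nat.prime_three.prime.not_isSquare ⟨n, h⟩⟩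

theorem sq_ne_sq_of_prime_eq {d : ℕ} [Zsqrtd.Nonsquare d] {p : ℕ} (hp : p.Prime) {x y z w : ℤ}
    (hxy : (p : ℤ) = x ^ 2 + y ^ 2) (hzw : (p : ℤ) = z ^ 2 + d * w ^ 2) : x ^ 2 ≠ z ^ 2 := by
  intro h
  obtain ⟨rfl, -⟩ := Zsqrtd.divides_sq_eq_zero_z (d := d) (x := y) (y := w)
    (by linear_combination hzw - hxy - h)
  exact (Nat.prime_iff_prime_int.mp hp).not_isSquare ⟨x, by rw [hxy]; ring⟩

theorem stmt_18 (p : ℕ) (hp : p.Prime) (hp12 : p % 12 = 1)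
    (x y z w : ℤ) (hx : Odd x) (hz : Odd z)
    (hxy : (p : ℤ) = x ^ 2 + y ^ 2) (hzw : (p : ℤ) = z ^ 2 + 3 * w ^ 2) :
    (2 * (p : ℤ) ^ 6 - 144 * (p : ℤ) ^ 5 * x ^ 2 + 1680 * (p : ℤ) ^ 4 * x ^ 4
      - 7168 * (p : ℤ) ^ 3 * x ^ 6 + 13824 * (p : ℤ) ^ 2 * x ^ 8
      - 12288 * (p : ℤ) * x ^ 10 + 4096 * x ^ 12) -
    (2 * (p : ℤ) ^ 6 - 144 * (p : ℤ) ^ 5 * z ^ 2 + 1680 * (p : ℤ) ^ 4 * z ^ 4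
      - 7168 * (p : ℤ) ^ 3 * z ^ 6 + 13824 * (p : ℤ) ^ 2 * z ^ 8
      - 12288 * (p : ℤ) * z ^ 10 + 4096 * z ^ 12) ≠ 0 := by
  have hp_odd : Odd (p : ℤ) := (Int.odd_coe_nat p).mpr (Nat.odd_iff.mpr (by omega))
  change twelfthPowerTrace p x - twelfthPowerTrace p z ≠ 0
  rw [twelfthPowerTrace_sub]
  have hxz : x ^ 2 ≠ z ^ 2 := sq_ne_sq_of_prime_eq (d := 3) hp hxy (by exact_mod_cast hzw)
  exact mul_ne_zero (sub_ne_zero.mpr hxz)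
    (twelfthPowerTraceDiffQuotient_ne_zero hp_odd (hx.pow.add_odd hz.pow))
end

section
/- Let β ≥ 2 and 2 ≤ κ ≤ β. Then ord₂(C(β+κ, 2κ)·2^(2κ)) ≥ ord₂(2β(β+1)) + κ − 1; in particular C(β+κ, 2κ)·2^(2κ) is divisible by 2^(δ+1) where δ = ord₂(2β(β+1)). -/
/-!
Write `C(β+κ, 2κ) (2κ)! = (β+κ)(β+κ-1)⋯(β-κ+1)` and pair the factors symmetrically around
`β + 1/2`: the pair `β, β+1` contributes `ord₂ (β(β+1))`, and each of the other `κ - 1` pairs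
`β-i, β+1+i` has odd sum, so contains an even number. Legendre's formula gives
`ord₂ (2κ)! < 2κ`, so multiplying by `2^(2κ)` instead of `(2κ)!` gains at least one more factor 2.
-/

lemma one_le_padicValNat_two_mul_of_odd_add {a b : ℕ} (ha : a ≠ 0) (hb : b ≠ 0)
    (h : Odd (a + b)) : 1 ≤ padicValNat 2 (a * b) := by
  refine one_le_padicValNat_of_dvd (mul_ne_zero ha hb) (even_iff_two_dvd.mp ?_)
  rw [Nat.odd_iff] at h
  rw [Nat.even_mul, Nat.even_iff, Nat.even_iff]
  omega

lemma padicValNat_two_mul_succ_add_le_descFactorial (β k : ℕ) (hk : k < β) :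
    padicValNat 2 (β * (β + 1)) + k ≤ padicValNat 2 ((β + k + 1).descFactorial (2 * k + 2)) := by
  induction k with
  | zero => simp [mul_comm]
  | succ k ih =>
    have hpair : 1 ≤ padicValNat 2 ((β + k + 2) * (β - (k + 1))) :=
      one_le_padicValNat_two_mul_of_odd_add (by omega) (by omega) ⟨β, by omega⟩
    have hsplit : (β + (k + 1) + 1).descFactorial (2 * (k + 1) + 2) =
        ((β + k + 2) * (β - (k + 1))) * (β + k + 1).descFactorial (2 * k + 2) := by
      rw [show β + (k + 1) + 1 = β + k + 1 + 1 by omega, show 2 * (k + 1) + 2 = 2 * k + 2 + 1 + 1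
        by omega, Nat.succ_descFactorial_succ, Nat.descFactorial_succ,
        show β + k + 1 - (2 * k + 2) = β - (k + 1) by omega]
      ring
    rw [hsplit, padicValNat.mul (mul_ne_zero (by omega) (by omega))
      (Nat.descFactorial_pos.mpr (by omega)).ne']
    have := ih (by omega)
    omega

lemma padicValNat_descFactorial_lt_choose_mul_pow (p : ℕ) [Fact p.Prime] {n k : ℕ}
    (hk : k ≠ 0) (hkn : k ≤ n) :
    padicValNat p (n.descFactorial k) < padicValNat p (n.choose k * p ^ k) := by
  have hchoose : n.choose k ≠ 0 := (Nat.choose_pos hkn).ne'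
  rw [Nat.descFactorial_eq_factorial_mul_choose, padicValNat.mul (Nat.factorial_ne_zero k) hchoose,
    padicValNat.mul hchoose (by simp [(Fact.out : p.Prime).ne_zero]), padicValNat.prime_pow]
  have := padicValNat_factorial_lt_of_ne_zero p hk
  omega

theorem stmt_19_general (β κ : ℕ) (hκ : 2 ≤ κ) (hκβ : κ ≤ β) :
    padicValNat 2 (Nat.choose (β + κ) (2 * κ) * 2 ^ (2 * κ)) ≥
      padicValNat 2 (2 * β * (β + 1)) + κ - 1 ∧
    2 ^ (padicValNat 2 (2 * β * (β + 1)) + 1) ∣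
      Nat.choose (β + κ) (2 * κ) * 2 ^ (2 * κ) := by
  obtain ⟨k, rfl⟩ : ∃ k, κ = k + 1 := ⟨κ - 1, by omega⟩
  have hpairs := padicValNat_two_mul_succ_add_le_descFactorial β k (by omega)
  have hgain := padicValNat_descFactorial_lt_choose_mul_pow 2
    (n := β + k + 1) (k := 2 * k + 2) (by omega) (by omega)
  have hval : padicValNat 2 (2 * β * (β + 1)) = 1 + padicValNat 2 (β * (β + 1)) := by
    rw [mul_assoc, padicValNat.mul two_ne_zero (mul_ne_zero (by omega) (by omega)),
      padicValNat_self]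
  rw [show β + (k + 1) = β + k + 1 by omega, show 2 * (k + 1) = 2 * k + 2 by omega] at *
  refine ⟨by omega, ?_⟩
  rw [padicValNat_dvd_iff_le (mul_ne_zero (Nat.choose_pos (by omega)).ne' (by positivity))]
  omega

theorem stmt_19 (β κ : ℕ) (hβ : 2 ≤ β) (hκ : 2 ≤ κ) (hκβ : κ ≤ β) :
    padicValNat 2 (Nat.choose (β + κ) (2 * κ) * 2 ^ (2 * κ)) ≥
      padicValNat 2 (2 * β * (β + 1)) + κ - 1 ∧
    2 ^ (padicValNat 2 (2 * β * (β + 1)) + 1) ∣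
      Nat.choose (β + κ) (2 * κ) * 2 ^ (2 * κ) :=
  stmt_19_general β κ hκ hκβ
end
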